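/- Let X ⊆ ℙ(ℂ^{d+1}) be a σ-invariant subset and V ⊆ ℂ^{d+1} a real ℂ-subspace of dimension ℓ ≥ 1 with ℙ(V) ∩ X = ∅. Then X is hyperbolic with respect to V if and only if the following Schubert-cycle condition holds: for every real subspace V_0 ⊆ V with dim V_0 = ℓ−1 and every real subspace U ⊇ V with dim U = ℓ+1, every ℂ-subspace V' of ℂ^{d+1} with V_0 ⊆ V' ⊆ U, dim V' = ℓ, and ℙ(V') ∩ X ≠ ∅ satisfies σ(V') = V' (i.e., V' is real). (Proposition 3.5: X is hyperbolic with respect to V if and only if every real one-dimensional Schubert cycle through V meets the associated hypersurface Y only in real points.) -/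

import Mathlib

/-!
Points of `ℙ(ℂ^{d+1})` are modelled by their nonzero representative vectors, and subsets of
`ℙ(ℂ^{d+1})` by their cones: sets of nonzero vectors stable under multiplication by nonzero
scalars. `σ` is coordinatewise complex conjugation; a point `[x]` is real iff `σ(x)` is a
scalar multiple of `x`, and a `ℂ`-subspace `W` is real iff `σ(W) = W` (equivalently, `σ`
maps `W` into `W`, `σ` being an involution). `ℂ^{d+1}` carries the standard Hermitian inner
product (`EuclideanSpace`).
-/

noncomputable section

/-- `ℂ^{d+1}` with the standard Hermitian inner product. -/
abbrev EE (d : ℕ) : Type := EuclideanSpace ℂ (Fin (d + 1))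

/-- Coordinatewise complex conjugation `σ`. -/
def conjE {d : ℕ} (x : EE d) : EE d := WithLp.toLp 2 (fun i => (starRingEnd ℂ) (x i))

/-- `x` represents a real point of projective space: `σ(x)` is proportional to `x`. -/
def IsRealPt {d : ℕ} (x : EE d) : Prop := ∃ c : ℂ, conjE x = c • x

/-- A real (σ-invariant) `ℂ`-subspace. -/
def IsRealSub {d : ℕ} (V : Submodule ℂ (EE d)) : Prop := ∀ x ∈ V, conjE x ∈ V

/-- `X` is the cone over a subset of projective space: `0 ∉ X` and `X` is stable under
multiplication by nonzero scalars. -/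
def IsProjCone {d : ℕ} (X : Set (EE d)) : Prop :=
  (0 : EE d) ∉ X ∧ ∀ x ∈ X, ∀ c : ℂ, c ≠ 0 → c • x ∈ X

/-- `X` is σ-invariant. -/
def IsSigmaInv {d : ℕ} (X : Set (EE d)) : Prop := ∀ x ∈ X, conjE x ∈ X

/-- The projection from `ℙ(V₀)`: orthogonal projection onto `V₀ᗮ` (on cones). -/
def projPerp {d : ℕ} (V₀ : Submodule ℂ (EE d)) (x : EE d) : EE d :=
  (V₀ᗮ.orthogonalProjectionOnto x : EE d)

/-- `X` (a cone over a subset of `ℙ(W)`) is hyperbolic, within the ambient subspace `W`,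
with respect to the real subspace `V ≤ W`: `ℙ(V) ∩ X = ∅` and for every real subspace
`U` with `V ≤ U ≤ W` and `dim U = dim V + 1`, every point of `X ∩ ℙ(U)` is real. -/
def HyperbolicIn {d : ℕ} (W : Submodule ℂ (EE d)) (X : Set (EE d))
    (V : Submodule ℂ (EE d)) : Prop :=
  (∀ x ∈ X, x ∉ V) ∧
    ∀ U : Submodule ℂ (EE d), U ≤ W → V ≤ U →
      Module.finrank ℂ U = Module.finrank ℂ V + 1 →
      IsRealSub U → ∀ x ∈ X, x ∈ U → IsRealPt x

/-- Hyperbolicity in the full ambient space `ℙ(ℂ^{d+1})`. -/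
def Hyperbolic {d : ℕ} (X : Set (EE d)) (V : Submodule ℂ (EE d)) : Prop :=
  HyperbolicIn ⊤ X V

/-!
If `X` is hyperbolic and `x ∈ X ∩ ℙ(V')`, then `x` is real, and `V' = V₀ ⊕ ℂx` is real as
a sum of real subspaces. Conversely, for `x ∈ X ∩ ℙ(U)` write `σx = v + a x` in
`U = V ⊕ ℂx`. For every real hyperplane `V₀` of `V`, `V₀ ⊕ ℂx` is real, so `σx ∈ V₀ ⊕ ℂx`
and uniqueness of the decomposition puts `v` in `V₀`. A nonzero vector of the real
subspace `V` is avoided by some real hyperplane (the orthogonal complement of a suitable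
`σ`-fixed vector), hence `v = 0` and `x` is real.
-/

section conj

variable {d : ℕ}

lemma conjE_add (x y : EE d) : conjE (x + y) = conjE x + conjE y := by
  ext i; simp [conjE]

lemma conjE_sub (x y : EE d) : conjE (x - y) = conjE x - conjE y := by
  ext i; simp [conjE]

lemma conjE_smul (c : ℂ) (x : EE d) : conjE (c • x) = starRingEnd ℂ c • conjE x := by
  ext i; simp [conjE]

lemma conjE_conjE (x : EE d) : conjE (conjE x) = x := by
  ext i; simp [conjE]

lemma inner_conjE_conjE (x y : EE d) :
    inner ℂ (conjE x) (conjE y) = starRingEnd ℂ (inner ℂ x y) := by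
  simp [PiLp.inner_apply, conjE, map_sum]

end conj

section DivisionRing

variable {K M : Type*} [DivisionRing K] [AddCommGroup M] [Module K M]

lemma Submodule.mem_sup_span_singleton_iff {W : Submodule K M} {x y : M} :
    y ∈ W ⊔ K ∙ x ↔ ∃ w ∈ W, ∃ a : K, w + a • x = y := by
  simp only [Submodule.mem_sup, Submodule.mem_span_singleton, exists_exists_eq_and]

lemma Submodule.eq_of_add_smul_eq_add_smul {W : Submodule K M} {x w w' : M} {a a' : K}
    (hx : x ∉ W) (hw : w ∈ W) (hw' : w' ∈ W) (h : w + a • x = w' + a' • x) : w = w' := by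
  obtain rfl : a = a' := by
    by_contra hne
    have hdiff : (a - a') • x = w' - w := by
      rw [sub_smul, sub_eq_sub_iff_add_eq_add, add_comm, h]
    apply hx
    rw [← inv_smul_smul₀ (sub_ne_zero.2 hne) x, hdiff]
    exact W.smul_mem _ (W.sub_mem hw' hw)
  exact add_right_cancel h

lemma Submodule.sup_span_singleton_eq_of_le [Module.Finite K M] {W W' : Submodule K M} {x : M}
    (hx : x ∉ W) (hWW' : W ≤ W') (hxW' : x ∈ W')
    (hdim : Module.finrank K W' = Module.finrank K W + 1) : W ⊔ K ∙ x = W' :=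
  Submodule.eq_of_le_of_finrank_eq (sup_le hWW' ((Submodule.span_singleton_le_iff_mem _ _).2 hxW'))
    (by rw [Submodule.finrank_sup_span_singleton hx, hdim])

end DivisionRing

namespace IsRealSub

variable {d : ℕ} {V W : Submodule ℂ (EE d)}

lemma sup_span_singleton (hW : IsRealSub W) {x : EE d} (hx : IsRealPt x) :
    IsRealSub (W ⊔ ℂ ∙ x) := by
  obtain ⟨c, hc⟩ := hx
  intro y hy
  obtain ⟨w, hw, a, rfl⟩ := Submodule.mem_sup_span_singleton_iff.1 hy
  rw [conjE_add, conjE_smul, hc, smul_smul]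
  exact Submodule.mem_sup_span_singleton_iff.2 ⟨_, hW w hw, _, rfl⟩

lemma orthogonal_span_singleton_inf (hV : IsRealSub V) {s : EE d} (hs : conjE s = s) :
    IsRealSub ((ℂ ∙ s)ᗮ ⊓ V) := by
  rintro x ⟨hxs, hxV⟩
  refine ⟨?_, hV x hxV⟩
  rw [SetLike.mem_coe, Submodule.mem_orthogonal_singleton_iff_inner_right] at hxs ⊢
  rw [← hs, inner_conjE_conjE, hxs, map_zero]

/-- The inner products of the `σ`-fixed vectors `w + σw` and `i (w - σw)` with `w` are
`‖w‖² + ⟪σw, w⟫` and `-i (‖w‖² - ⟪σw, w⟫)`, which cannot both vanish. -/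
lemma exists_conjE_eq_self_inner_ne_zero (hV : IsRealSub V) {w : EE d} (hwV : w ∈ V)
    (hw : w ≠ 0) : ∃ s ∈ V, conjE s = s ∧ inner ℂ s w ≠ 0 := by
  have hσw := hV w hwV
  by_cases hsum : inner ℂ (w + conjE w) w = 0
  · refine ⟨Complex.I • (w - conjE w), V.smul_mem _ (V.sub_mem hwV hσw), ?_, ?_⟩
    · rw [conjE_smul, conjE_sub, conjE_conjE, Complex.conj_I, neg_smul, ← smul_neg, neg_sub]
    · rw [inner_add_left] at hsum
      rw [inner_smul_left, inner_sub_left, Complex.conj_I]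
      intro h
      have : inner ℂ w w = (0 : ℂ) := by
        linear_combination
          (hsum + Complex.I * h + (inner ℂ w w - inner ℂ (conjE w) w) * Complex.I_sq) / 2
      exact hw (inner_self_eq_zero.1 this)
  · refine ⟨w + conjE w, V.add_mem hwV hσw, ?_, hsum⟩
    rw [conjE_add, conjE_conjE, add_comm]

lemma exists_hyperplane_notMem (hV : IsRealSub V) {w : EE d} (hwV : w ∈ V) (hw : w ≠ 0) :
    ∃ V₀ ≤ V, IsRealSub V₀ ∧ Module.finrank ℂ V₀ + 1 = Module.finrank ℂ V ∧ w ∉ V₀ := by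
  obtain ⟨s, hsV, hs, hsw⟩ := hV.exists_conjE_eq_self_inner_ne_zero hwV hw
  have hs0 : s ≠ 0 := by rintro rfl; exact hsw (inner_zero_left w)
  refine ⟨(ℂ ∙ s)ᗮ ⊓ V, inf_le_right, hV.orthogonal_span_singleton_inf hs, ?_, ?_⟩
  · have h := Submodule.finrank_add_inf_finrank_orthogonal
      ((Submodule.span_singleton_le_iff_mem _ _).2 hsV)
    rwa [finrank_span_singleton hs0, add_comm] at h
  · rintro ⟨hws, -⟩
    exact hsw ((Submodule.mem_orthogonal_singleton_iff_inner_right).1 hws)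

lemma isRealPt_of_forall_hyperplane {U : Submodule ℂ (EE d)} (hV : IsRealSub V)
    (hU : IsRealSub U) (hVU : V ≤ U)
    (hUdim : Module.finrank ℂ U = Module.finrank ℂ V + 1) {x : EE d} (hxV : x ∉ V) (hxU : x ∈ U)
    (h : ∀ V₀ ≤ V, IsRealSub V₀ → Module.finrank ℂ V₀ + 1 = Module.finrank ℂ V →
      IsRealSub (V₀ ⊔ ℂ ∙ x)) :
    IsRealPt x := by
  have hUeq := Submodule.sup_span_singleton_eq_of_le hxV hVU hxU hUdim
  obtain ⟨v, hv, a, hva⟩ := Submodule.mem_sup_span_singleton_iff.1 (hUeq ▸ hU x hxU)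
  obtain rfl | hv0 := eq_or_ne v 0
  · exact ⟨a, by rw [← hva, zero_add]⟩
  obtain ⟨V₀, hV₀V, hV₀, hV₀dim, hvV₀⟩ := hV.exists_hyperplane_notMem hv hv0
  obtain ⟨v', hv', a', hva'⟩ := Submodule.mem_sup_span_singleton_iff.1 <|
    h V₀ hV₀V hV₀ hV₀dim x (Submodule.mem_sup_right (Submodule.mem_span_singleton_self x))
  have hvv' := Submodule.eq_of_add_smul_eq_add_smul hxV hv (hV₀V hv') (hva.trans hva'.symm)
  exact (hvV₀ (hvv' ▸ hv')).elim

end IsRealSub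

theorem stmt11_general (d ℓ : ℕ) (hℓ1 : 1 ≤ ℓ)
    (X : Set (EE d))
    (V : Submodule ℂ (EE d)) (hVreal : IsRealSub V)
    (hVdim : Module.finrank ℂ V = ℓ)
    (hdisj : ∀ x ∈ X, x ∉ V) :
    Hyperbolic X V ↔
      ∀ V₀ : Submodule ℂ (EE d), V₀ ≤ V → IsRealSub V₀ →
        Module.finrank ℂ V₀ = ℓ - 1 →
      ∀ U : Submodule ℂ (EE d), V ≤ U → IsRealSub U →
        Module.finrank ℂ U = ℓ + 1 →
      ∀ V' : Submodule ℂ (EE d), V₀ ≤ V' → V' ≤ U →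
        Module.finrank ℂ V' = ℓ →
        (∃ x ∈ X, x ∈ V') → IsRealSub V' := by
  constructor
  · rintro hyp V₀ hV₀V hV₀ hV₀dim U hVU hU hUdim V' hV₀V' hV'U hV'dim ⟨x, hxX, hxV'⟩
    have hx : IsRealPt x := hyp.2 U le_top hVU (by rw [hUdim, hVdim]) hU x hxX (hV'U hxV')
    have hV' : V₀ ⊔ ℂ ∙ x = V' := Submodule.sup_span_singleton_eq_of_le
      (fun h => hdisj x hxX (hV₀V h)) hV₀V' hxV' (by omega)
    exact hV' ▸ hV₀.sup_span_singleton hx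
  · refine fun h => ⟨hdisj, fun U _ hVU hUdim hU x hxX hxU => ?_⟩
    refine hVreal.isRealPt_of_forall_hyperplane hU hVU hUdim (hdisj x hxX) hxU ?_
    intro V₀ hV₀V hV₀ hV₀dim
    have hxV₀ : x ∉ V₀ := fun h => hdisj x hxX (hV₀V h)
    refine h V₀ hV₀V hV₀ (by omega) U hVU hU (by omega) _ le_sup_left
      (sup_le (hV₀V.trans hVU) ((Submodule.span_singleton_le_iff_mem _ _).2 hxU)) ?_
      ⟨x, hxX, Submodule.mem_sup_right (Submodule.mem_span_singleton_self x)⟩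
    rw [Submodule.finrank_sup_span_singleton hxV₀]
    omega

theorem stmt11 (d ℓ : ℕ) (hℓ1 : 1 ≤ ℓ) (hℓ2 : ℓ ≤ d)
    (X : Set (EE d)) (hXcone : IsProjCone X) (hXσ : IsSigmaInv X)
    (V : Submodule ℂ (EE d)) (hVreal : IsRealSub V)
    (hVdim : Module.finrank ℂ V = ℓ)
    (hdisj : ∀ x ∈ X, x ∉ V) :
    Hyperbolic X V ↔
      ∀ V₀ : Submodule ℂ (EE d), V₀ ≤ V → IsRealSub V₀ →
        Module.finrank ℂ V₀ = ℓ - 1 →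
      ∀ U : Submodule ℂ (EE d), V ≤ U → IsRealSub U →
        Module.finrank ℂ U = ℓ + 1 →
      ∀ V' : Submodule ℂ (EE d), V₀ ≤ V' → V' ≤ U →
        Module.finrank ℂ V' = ℓ →
        (∃ x ∈ X, x ∈ V') → IsRealSub V' :=
  stmt11_general d ℓ hℓ1 X V hVreal hVdim hdisj
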